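/- arXiv:2601.20961 — 3 statements merged into one kernel-verified Lean document; each statement's English description precedes it below -/
import Mathlib

section
/- For any finite concept class H of Borel-measurable functions h : X → {0,1} on a Polish space X with |H| ≥ 2, H is agnostically learnable with optimal rate e^{−n}: H is agnostically learnable at rate R(n) = e^{−n}, and H is not agnostically learnable faster than R(n) = e^{−n}. -/
open MeasureTheory Filter
open scoped ENNReal

namespace Agn

section Basic

variable {X : Type*} [MeasurableSpace X]

/-- A set is universally measurable: null-measurable w.r.t. every probability measure. -/
def UnivMeasurableSet {α : Type*} [MeasurableSpace α] (s : Set α) : Prop :=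
  ∀ μ : Measure α, IsProbabilityMeasure μ → NullMeasurableSet s μ

/-- A function is universally measurable. -/
def UnivMeasurable {α β : Type*} [MeasurableSpace α] [MeasurableSpace β] (f : α → β) : Prop :=
  ∀ μ : Measure α, IsProbabilityMeasure μ → NullMeasurable f μ

/-- Error rate of a classifier under `P`. -/
noncomputable def er (P : Measure (X × Bool)) (h : X → Bool) : ℝ :=
  (P {p | h p.1 ≠ p.2}).toReal

/-- The best error rate achievable by the class `H`. -/
noncomputable def optErr (P : Measure (X × Bool)) (H : Set (X → Bool)) : ℝ :=
  sInf ((fun h => er P h) '' H)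

/-- The i.i.d. sample measure `P^n`. -/
noncomputable def sampleMeasure (P : Measure (X × Bool)) (n : ℕ) :
    Measure (Fin n → X × Bool) :=
  Measure.pi fun _ => P

end Basic

/-- A (candidate) learning algorithm: a function of the sample and the test point. -/
abbrev Alg (X : Type*) := (n : ℕ) → (Fin n → X × Bool) → X → Bool

section Learn

variable {X : Type*} [MeasurableSpace X]

/-- A learning algorithm: a sequence of universally measurable functions. -/
def IsLearningAlg (f : Alg X) : Prop :=
  ∀ n : ℕ, UnivMeasurable fun p : (Fin n → X × Bool) × X => f n p.1 p.2

/-- Expected error rate of the classifier returned from an i.i.d. sample of size `n`. -/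
noncomputable def expErr (P : Measure (X × Bool)) (f : Alg X) (n : ℕ) : ℝ :=
  ∫ S, er P (f n S) ∂ sampleMeasure P n

/-- Expected excess error rate. -/
noncomputable def excess (P : Measure (X × Bool)) (H : Set (X → Bool)) (f : Alg X)
    (n : ℕ) : ℝ :=
  expErr P f n - optErr P H

/-- `H` is agnostically learnable at rate `R`. -/
def LearnableAtRate (H : Set (X → Bool)) (R : ℕ → ℝ) : Prop :=
  ∃ f : Alg X, IsLearningAlg f ∧
    ∀ P : Measure (X × Bool), IsProbabilityMeasure P →
      ∃ C > (0 : ℝ), ∃ c > (0 : ℝ), ∀ n : ℕ, excess P H f n ≤ C * R ⌈c * (n : ℝ)⌉₊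

/-- `H` is not agnostically learnable faster than `R`. -/
def NotLearnableFasterThan (H : Set (X → Bool)) (R : ℕ → ℝ) : Prop :=
  ∃ C > (0 : ℝ), ∃ c > (0 : ℝ), ∀ f : Alg X, IsLearningAlg f →
    ∃ P : Measure (X × Bool), IsProbabilityMeasure P ∧
      ∃ᶠ n : ℕ in atTop, C * R ⌈c * (n : ℝ)⌉₊ ≤ excess P H f n

/-- `H` is agnostically learnable with optimal rate exactly `e^{-o(n)}`. -/
def OptimalRateNearExp (H : Set (X → Bool)) : Prop :=
  (∀ ψ : ℕ → ℝ, (∀ n, 0 ≤ ψ n) →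
      Tendsto (fun n : ℕ => ψ n / (n : ℝ)) atTop (nhds 0) →
      LearnableAtRate H fun n => Real.exp (-ψ n)) ∧
  ∀ f : Alg X, IsLearningAlg f →
    ∃ ψ : ℕ → ℝ, (∀ n, 0 ≤ ψ n) ∧
      Tendsto (fun n : ℕ => ψ n / (n : ℝ)) atTop (nhds 0) ∧
      ∃ P : Measure (X × Bool), IsProbabilityMeasure P ∧
        ∃ᶠ n in atTop, Real.exp (-ψ n) ≤ excess P H f n

/-- `H` is agnostically learnable with optimal rate exactly `o(n^{-1/2})`. -/
def OptimalRateSuperRoot (H : Set (X → Bool)) : Prop :=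
  (∃ f : Alg X, IsLearningAlg f ∧
      ∀ P : Measure (X × Bool), IsProbabilityMeasure P →
        Tendsto (fun n : ℕ => Real.sqrt (n : ℝ) * excess P H f n) atTop (nhds 0)) ∧
  ∀ R : ℕ → ℝ, (∀ n, 0 < R n) →
    Tendsto (fun n : ℕ => Real.sqrt (n : ℝ) * R n) atTop (nhds 0) →
    ¬ LearnableAtRate H R

/-- `H` requires arbitrarily slow rates for agnostic learning. -/
def RequiresArbitrarilySlowRates (H : Set (X → Bool)) : Prop :=
  (∃ f : Alg X, IsLearningAlg f ∧
      ∀ P : Measure (X × Bool), IsProbabilityMeasure P →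
        Filter.limsup (fun n : ℕ => excess P H f n) atTop ≤ 0) ∧
  ∀ R : ℕ → ℝ, (∀ n, 0 < R n) → Tendsto R atTop (nhds 0) →
    NotLearnableFasterThan H R

end Learn

/-- A witness of the image admissible Suslin property. -/
structure SuslinWitness (X : Type*) [MeasurableSpace X] (H : Set (X → Bool)) where
  Θ : Type
  topΘ : TopologicalSpace Θ
  measΘ : MeasurableSpace Θ
  polish : @PolishSpace Θ topΘ
  borel : @BorelSpace Θ topΘ measΘ
  F : Θ × X → Bool
  measF : @Measurable (Θ × X) Bool (@Prod.instMeasurableSpace Θ X measΘ _) _ F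
  range_eq : H = {g | ∃ θ : Θ, g = fun x => F (θ, x)}

/-- The image admissible Suslin property. -/
def ImageAdmissibleSuslin (X : Type*) [MeasurableSpace X] (H : Set (X → Bool)) : Prop :=
  Nonempty (SuslinWitness X H)

section Trees

variable {X : Type*}

/-- `H` shatters an infinite Littlestone tree. -/
def ShattersInfLittlestoneTree (H : Set (X → Bool)) : Prop :=
  ∃ t : List Bool → X, ∀ y : ℕ → Bool, ∀ n : ℕ, ∃ h ∈ H,
    ∀ k ≤ n, h (t (List.ofFn fun i : Fin k => y i)) = y k

/-- `H` shatters an infinite VCL tree. -/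
def ShattersInfVCLTree (H : Set (X → Bool)) : Prop :=
  ∃ t : (k : ℕ) → ((j : Fin k) → Fin (j.1 + 1) → Bool) → Fin (k + 1) → X,
    ∀ y : (k : ℕ) → Fin (k + 1) → Bool, ∀ n : ℕ, ∃ h ∈ H,
      ∀ k ≤ n, ∀ i : Fin (k + 1), h (t k (fun j => y j.1) i) = y k i

/-- `H` (VC-)shatters some set of `n` points. -/
def Shatters (H : Set (X → Bool)) (n : ℕ) : Prop :=
  ∃ x : Fin n → X, ∀ y : Fin n → Bool, ∃ h ∈ H, ∀ i, h (x i) = y i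

end Trees

/-- `log x := ln (max x e)`, the truncated logarithm used throughout. -/
noncomputable def clog (x : ℝ) : ℝ := Real.log (max x (Real.exp 1))

/-- `ε²(n,δ) = (1/n)(d log(n/d) + log(1/δ))`. -/
noncomputable def epsSq (d n : ℕ) (δ : ℝ) : ℝ :=
  (1 / (n : ℝ)) * ((d : ℝ) * clog ((n : ℝ) / (d : ℝ)) + clog (1 / δ))

section Emp

variable {X : Type*}

/-- Empirical risk on a sample. -/
noncomputable def empErr {n : ℕ} (S : Fin n → X × Bool) (h : X → Bool) : ℝ :=
  (1 / (n : ℝ)) * ∑ i, if h (S i).1 = (S i).2 then 0 else 1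

/-- Empirical distance between two classifiers on a sample. -/
noncomputable def empDist {n : ℕ} (S : Fin n → X × Bool) (f g : X → Bool) : ℝ :=
  (1 / (n : ℝ)) * ∑ i, if f (S i).1 = g (S i).1 then 0 else 1

end Emp

section Mix

variable {X : Type*} [MeasurableSpace X]

/-- The uniform mixture `P̄ = (1/n) ∑ Pᵢ`. -/
noncomputable def mixMeasure {n : ℕ} (P : Fin n → Measure (X × Bool)) : Measure (X × Bool) :=
  (n : ℝ≥0∞)⁻¹ • ∑ i, P i

/-- Population distance `Q({(x,y) : f x ≠ g x})`. -/
noncomputable def popDist (Q : Measure (X × Bool)) (f g : X → Bool) : ℝ :=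
  (Q {p | f p.1 ≠ g p.1}).toReal

end Mix

section Partial

variable {X : Type*} [MeasurableSpace X]

/-- Realizable binary classifications of a finite sample by a partial concept class. -/
def pproj (G : Set (X → Option Bool)) {n : ℕ} (x : Fin n → X) : Set (Fin n → Bool) :=
  {b | ∃ g ∈ G, ∀ i, g (x i) = some (b i)}

/-- The partial class `G` shatters some `n` points. -/
def PShatters (G : Set (X → Option Bool)) (n : ℕ) : Prop :=
  ∃ x : Fin n → X, pproj G x = Set.univ

/-- Universal measurability of a partial concept class. -/
def PUnivMeasurable (G : Set (X → Option Bool)) : Prop :=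
  ∀ (n : ℕ) (b : Fin n → Bool), UnivMeasurableSet {x : Fin n → X | b ∈ pproj G x}

/-- The conditional probability `P(Y = y | X = x)` determined by `η`. -/
noncomputable def condProb (η : X → ℝ) (x : X) (y : Bool) : ℝ :=
  if y then η x else 1 - η x

/-- The Bayes classifier determined by `η`. -/
noncomputable def bayes (η : X → ℝ) : X → Bool := fun x => decide ((1 / 2 : ℝ) ≤ η x)

/-- The marginal distribution of `P` on `X`. -/
noncomputable def marginalX (P : Measure (X × Bool)) : Measure X := P.map Prod.fst

/-- `η` is a (Borel) version of `P(Y = 1 | X = ·)` with values in `[0,1]`. -/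
def IsCondDist (P : Measure (X × Bool)) (η : X → ℝ) : Prop :=
  Measurable η ∧ (∀ x, 0 ≤ η x ∧ η x ≤ 1) ∧
    ∀ s : Set X, MeasurableSet s →
      P (s ×ˢ ({true} : Set Bool)) = ∫⁻ x in s, ENNReal.ofReal (η x) ∂ marginalX P

/-- `P` is Bayes-realizable with respect to the partial concept class `G`. -/
def BayesRealizable (G : Set (X → Option Bool)) (P : Measure (X × Bool)) (η : X → ℝ) : Prop :=
  ∀ n : ℕ, ∀ᵐ x ∂ (Measure.pi fun _ : Fin n => marginalX P),
    ∃ b ∈ pproj G x, ∀ i, (1 / 2 : ℝ) ≤ condProb η (x i) (b i)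

end Partial

/-- The Bernoulli measure on `Bool` with success probability `p`. -/
noncomputable def bern (p : ℝ) : Measure Bool :=
  ENNReal.ofReal p • Measure.dirac true + ENNReal.ofReal (1 - p) • Measure.dirac false

section Labels

variable {X : Type*} [MeasurableSpace X]

/-- The conditional law of the labels given the instances. -/
noncomputable def labelLaw (η : X → ℝ) {n : ℕ} (x : Fin n → X) : Measure (Fin n → Bool) :=
  Measure.pi fun i => bern (η (x i))

end Labels

section FinLab

variable {X : Type*}

/-- Empirical risk of a labeling `f` against realized labels `y`. -/
noncomputable def empErrLab {n : ℕ} (y f : Fin n → Bool) : ℝ :=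
  (1 / (n : ℝ)) * ∑ i, if f i = y i then 0 else 1

/-- Hamming distance (normalized) between two labelings. -/
noncomputable def distLab {n : ℕ} (f g : Fin n → Bool) : ℝ :=
  (1 / (n : ℝ)) * ∑ i, if f i = g i then 0 else 1

/-- Semi-empirical error of a labeling on the length-`t` prefix. -/
noncomputable def semiErrFin (η : X → ℝ) {n : ℕ} (x : Fin n → X) (t : ℕ)
    (f : Fin n → Bool) : ℝ :=
  (1 / (t : ℝ)) * ∑ i : Fin n, if i.1 < t then 1 - condProb η (x i) (f i) else 0

/-- Semi-empirical Bayes error on the length-`t` prefix. -/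
noncomputable def semiErrBayesFin (η : X → ℝ) {n : ℕ} (x : Fin n → X) (t : ℕ) : ℝ :=
  (1 / (t : ℝ)) * ∑ i : Fin n, if i.1 < t then min (η (x i)) (1 - η (x i)) else 0

/-- Normalized disagreement between labelings on the length-`t` prefix. -/
noncomputable def distFin {n : ℕ} (t : ℕ) (f g : Fin n → Bool) : ℝ :=
  (1 / (t : ℝ)) * ∑ i : Fin n, if i.1 < t ∧ f i ≠ g i then 1 else 0

end FinLab

section Seq

variable {X : Type*}

/-- The labeling `g` of the first `n` points is realizable by `G`. -/
def memProj (G : Set (X → Option Bool)) (x : ℕ → X) (n : ℕ) (g : ℕ → Bool) : Prop :=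
  ∃ g' ∈ G, ∀ i < n, g' (x i) = some (g i)

/-- Semi-empirical error of a labeling on the first `t` points. -/
noncomputable def semiErrSeq (η : X → ℝ) (x : ℕ → X) (t : ℕ) (g : ℕ → Bool) : ℝ :=
  (1 / (t : ℝ)) * ∑ i ∈ Finset.range t, (1 - condProb η (x i) (g i))

/-- Semi-empirical Bayes error on the first `t` points. -/
noncomputable def semiErrBayesSeq (η : X → ℝ) (x : ℕ → X) (t : ℕ) : ℝ :=
  (1 / (t : ℝ)) * ∑ i ∈ Finset.range t, min (η (x i)) (1 - η (x i))

/-- Normalized disagreement between two labelings on the first `t` points. -/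
noncomputable def distSeq (t : ℕ) (f g : ℕ → Bool) : ℝ :=
  (1 / (t : ℝ)) * ∑ i ∈ Finset.range t, if f i = g i then 0 else 1

/-- Projection of the `ε`-near-optimal realizable labelings of the first `t` points
to the first `m` coordinates. -/
def projGood (G : Set (X → Option Bool)) (η : X → ℝ) (x : ℕ → X) (ε : ℝ) (t m : ℕ) :
    Set (Fin m → Bool) :=
  {b | ∃ g : ℕ → Bool, memProj G x t g ∧
    semiErrSeq η x t g - semiErrBayesSeq η x t ≤ ε ∧ ∀ j : Fin m, b j = g (j : ℕ)}

end Seq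

/-- `Z` is an i.i.d. sequence with common law `P` on the probability space `(Ω, μ)`. -/
def IsIIDSeq {Ω : Type*} [MeasurableSpace Ω] (μ : Measure Ω) {Y : Type*} [MeasurableSpace Y]
    (P : Measure Y) (Z : ℕ → Ω → Y) : Prop :=
  (∀ i, Measurable (Z i)) ∧
    ∀ n : ℕ, μ.map (fun ω => fun i : Fin n => Z (i : ℕ) ω) = Measure.pi fun _ : Fin n => P

section UGCsec

variable {X : Type*} [MeasurableSpace X]

/-- The uniform deviation of empirical frequencies over the class `H`. -/
noncomputable def ugcDev (H : Set (X → Bool)) (Q : Measure X) {n : ℕ} (x : Fin n → X) : ℝ :=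
  sSup ((fun h => |(1 / (n : ℝ)) * (∑ i, if h (x i) = true then (1 : ℝ) else 0) -
      (Q {z | h z = true}).toReal|) '' H)

/-- The universal Glivenko–Cantelli property. -/
def UGC (H : Set (X → Bool)) : Prop :=
  ∀ Q : Measure X, IsProbabilityMeasure Q →
    Tendsto (fun n : ℕ => ∫ x, ugcDev H Q x ∂ (Measure.pi fun _ : Fin n => Q)) atTop (nhds 0)

/-- `H` is totally bounded in `L₁(Q)`. -/
def TotallyBoundedL1 (H : Set (X → Bool)) (Q : Measure X) : Prop :=
  ∀ ε : ℝ, 0 < ε → ∃ H' : Set (X → Bool), H' ⊆ H ∧ H'.Finite ∧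
    ∀ h ∈ H, ∃ h' ∈ H', (Q {x | h' x ≠ h x}).toReal ≤ ε

end UGCsec

/-!
Upper bound: empirical risk minimisation. By Hoeffding's inequality, a hypothesis whose error
exceeds the optimum by `γ > 0` has empirical risk at most that of an optimal hypothesis with
probability at most `exp (-n γ² / 2)`, so a union bound over the finite class bounds the excess
risk of ERM by `|H| exp (-c n)`, with `c` half the square of the smallest positive gap.

Lower bound: two hypotheses disagree at some `x₀`. Let `bernAt x₀ p` put all its mass on `x₀`,
with label `true` with probability `p`. For `p = 3/4` and `p = 1/4` the optimal error is `1/4`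
and the excess of a learner is half the probability that it predicts the minority label at `x₀`.
Every label sequence of length `n` is at most `3ⁿ` times likelier under one law than under the
other, so for one of the two laws the excess is at least `3⁻ⁿ / 4 ≥ exp (-2n) / 4`.
-/

open ProbabilityTheory Set

section Loss

variable {X : Type*}

/-- `empErr S h` is the average of `loss h` over the sample `S`. -/
def loss (h : X → Bool) (p : X × Bool) : ℝ := if h p.1 = p.2 then 0 else 1

lemma loss_mem_Icc (h : X → Bool) (p : X × Bool) : loss h p ∈ Icc (0 : ℝ) 1 := by
  unfold loss
  split_ifs <;> norm_num

variable [MeasurableSpace X]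

lemma measurable_loss {h : X → Bool} (hh : Measurable h) : Measurable (loss h) :=
  Measurable.ite (measurableSet_eq_fun (hh.comp measurable_fst) measurable_snd)
    measurable_const measurable_const

lemma integral_loss (P : Measure (X × Bool)) [IsProbabilityMeasure P] {h : X → Bool}
    (hh : Measurable h) : ∫ p, loss h p ∂P = er P h := by
  have hs : MeasurableSet {p : X × Bool | h p.1 ≠ p.2} :=
    (measurableSet_eq_fun (hh.comp measurable_fst) measurable_snd).compl
  have : loss h = {p : X × Bool | h p.1 ≠ p.2}.indicator 1 := by
    ext p
    by_cases hp : h p.1 = p.2 <;> simp [loss, hp]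
  rw [this, integral_indicator_one hs, er, measureReal_def]

lemma integrable_loss (P : Measure (X × Bool)) [IsFiniteMeasure P] {h : X → Bool}
    (hh : Measurable h) : Integrable (loss h) P :=
  .of_mem_Icc 0 1 (measurable_loss hh).aemeasurable (ae_of_all _ (loss_mem_Icc h))

lemma measurable_empErr {n : ℕ} {h : X → Bool} (hh : Measurable h) :
    Measurable fun S : Fin n → X × Bool => empErr S h :=
  (Finset.measurable_sum _ fun i _ => (measurable_loss hh).comp (measurable_pi_apply i)).const_mul _

lemma er_nonneg (P : Measure (X × Bool)) (h : X → Bool) : 0 ≤ er P h := ENNReal.toReal_nonneg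

lemma er_le_one (P : Measure (X × Bool)) [IsProbabilityMeasure P] (h : X → Bool) :
    er P h ≤ 1 := measureReal_le_one

lemma optErr_le_er (P : Measure (X × Bool)) {H : Set (X → Bool)} {h : X → Bool} (hh : h ∈ H) :
    optErr P H ≤ er P h :=
  csInf_le ⟨0, by rintro _ ⟨g, -, rfl⟩; exact er_nonneg P g⟩ (mem_image_of_mem _ hh)

lemma exists_er_eq_optErr (P : Measure (X × Bool)) {H : Set (X → Bool)} (hfin : H.Finite)
    (hne : H.Nonempty) : ∃ h ∈ H, er P h = optErr P H :=
  (hne.image _).csInf_mem (hfin.image _)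

instance isProbabilityMeasure_sampleMeasure (P : Measure (X × Bool)) [IsProbabilityMeasure P]
    (n : ℕ) : IsProbabilityMeasure (sampleMeasure P n) := by
  unfold sampleMeasure
  infer_instance

/-- Hoeffding's inequality for the i.i.d. differences `loss h - loss g ∈ [-1, 1]`. -/
lemma sampleMeasure_real_empErr_le_le_exp (P : Measure (X × Bool)) [IsProbabilityMeasure P]
    {g h : X → Bool} (hg : Measurable g) (hh : Measurable h) (hgap : er P h ≤ er P g) (n : ℕ) :
    (sampleMeasure P n).real {S | empErr S g ≤ empErr S h} ≤
      Real.exp (-(n * (er P g - er P h) ^ 2 / 2)) := by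
  set γ := er P g - er P h
  set Y : X × Bool → ℝ := fun p => loss h p - loss g p
  have hYm : Measurable Y := (measurable_loss hh).sub (measurable_loss hg)
  have hYmem (p : X × Bool) : Y p ∈ Icc (-1 : ℝ) 1 := by
    obtain ⟨hh₀, hh₁⟩ := loss_mem_Icc h p
    obtain ⟨hg₀, hg₁⟩ := loss_mem_Icc g p
    constructor <;> linarith
  have hYint : ∫ q, Y q ∂P = -γ := by
    rw [integral_sub (integrable_loss P hh) (integrable_loss P hg), integral_loss P hh,
      integral_loss P hg]
    ring
  have hsub : HasSubgaussianMGF (fun p => Y p - ∫ q, Y q ∂P) 1 P := by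
    have := hasSubgaussianMGF_of_mem_Icc hYm.aemeasurable (ae_of_all P hYmem)
    norm_num at this
    exact this
  have hind : iIndepFun (fun (i : Fin n) (S : Fin n → X × Bool) => Y (S i) - ∫ q, Y q ∂P)
      (sampleMeasure P n) :=
    iIndepFun_pi (X := fun _ p => Y p - ∫ q, Y q ∂P) fun _ => (hYm.sub_const _).aemeasurable
  have hsubS (i : Fin n) :
      HasSubgaussianMGF (fun S : Fin n → X × Bool => Y (S i) - ∫ q, Y q ∂P) 1
        (sampleMeasure P n) := by
    refine HasSubgaussianMGF.of_map (X := fun p => Y p - ∫ q, Y q ∂P)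
      (measurable_pi_apply i).aemeasurable ?_
    rwa [sampleMeasure, (measurePreserving_eval (fun _ : Fin n => P) i).map_eq]
  have hγ : 0 ≤ γ := sub_nonneg.2 hgap
  have hH := HasSubgaussianMGF.measure_sum_ge_le_of_iIndepFun hind (c := fun _ => 1)
    (s := Finset.univ) (fun i _ => hsubS i) (ε := n * γ) (by positivity)
  simp only [Finset.sum_sub_distrib, Finset.sum_const, Finset.card_univ, Fintype.card_fin,
    nsmul_eq_mul, mul_one, NNReal.coe_natCast] at hH
  have hexp : -(n * γ) ^ 2 / (2 * n) = -(n * γ ^ 2 / 2) := by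
    rcases eq_or_ne (n : ℝ) 0 with hn | hn
    · simp [hn]
    · field_simp
  refine le_trans (measureReal_mono fun S hS => ?_) (hexp ▸ hH)
  have hS : ∑ i, loss g (S i) ≤ ∑ i, loss h (S i) := by
    rcases Nat.eq_zero_or_pos n with rfl | hn
    · simp
    · exact le_of_mul_le_mul_left hS (by positivity)
  show n * γ ≤ ∑ i, Y (S i) - n * ∫ q, Y q ∂P
  simp only [Y, Finset.sum_sub_distrib, hYint]
  linarith

end Loss

lemma exp_neg_le_exp_one_mul_exp_neg_ceil {x : ℝ} (hx : 0 ≤ x) :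
    Real.exp (-x) ≤ Real.exp 1 * Real.exp (-⌈x⌉₊) := by
  rw [← Real.exp_add]
  exact Real.exp_le_exp.2 (by linarith [Nat.ceil_lt_add_one hx])

lemma exp_neg_ceil_two_mul_le (n : ℕ) : Real.exp (-⌈2 * (n : ℝ)⌉₊) ≤ (1 / 3) ^ n := by
  have h3 : Real.exp (-2) ≤ 1 / 3 := by
    rw [Real.exp_neg, one_div]
    gcongr
    linarith [Real.add_one_le_exp 2]
  rw [show 2 * (n : ℝ) = ((2 * n : ℕ) : ℝ) by push_cast; ring, Nat.ceil_natCast]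
  calc Real.exp (-((2 * n : ℕ) : ℝ)) = Real.exp (-2) ^ n := by
        rw [← Real.exp_nat_mul]
        push_cast
        ring_nf
    _ ≤ _ := pow_le_pow_left₀ (Real.exp_pos _).le h3 n

section ArgminFirst

variable {ι : Type*} [Fintype ι] [Nonempty ι] [LinearOrder ι]

noncomputable def argminFirst (F : ι → ℝ) : ι :=
  (Finset.univ.filter fun i => ∀ k, F i ≤ F k).min'
    (let ⟨i, hi⟩ := Finite.exists_min F; ⟨i, by simpa using hi⟩)

lemma argminFirst_le (F : ι → ℝ) (k : ι) : F (argminFirst F) ≤ F k :=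
  (Finset.mem_filter.1 (Finset.min'_mem (Finset.univ.filter fun i => ∀ k, F i ≤ F k) _)).2 k

lemma argminFirst_eq_iff {F : ι → ℝ} {j : ι} :
    argminFirst F = j ↔ (∀ k, F j ≤ F k) ∧ ∀ i < j, ∃ k, F k < F i := by
  simp only [argminFirst, Finset.min'_eq_iff, Finset.mem_filter, Finset.mem_univ, true_and]
  refine and_congr_right fun _ => ⟨fun h i hij => ?_, fun h i hi => ?_⟩
  · by_contra! hi
    exact absurd (h i hi) (not_le.2 hij)
  · by_contra! hij
    obtain ⟨k, hk⟩ := h i hij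
    exact absurd (hi k) (not_le.2 hk)

lemma measurable_argminFirst [MeasurableSpace ι] {Ω : Type*} [MeasurableSpace Ω]
    {F : ι → Ω → ℝ} (hF : ∀ i, Measurable (F i)) :
    Measurable fun ω => argminFirst (F · ω) := by
  refine measurable_to_countable' fun j => ?_
  simp only [Set.preimage, Set.mem_singleton_iff, argminFirst_eq_iff]
  exact Measurable.setOf <| .and (.forall fun k => (measurableSet_le (hF j) (hF k)).mem)
    (.forall fun i => .imp measurable_const
      (.exists fun k => (measurableSet_lt (hF k) (hF i)).mem))

end ArgminFirst

section ERM

variable {X ι : Type*} [MeasurableSpace X] [Fintype ι] [Nonempty ι] [LinearOrder ι]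
  [MeasurableSpace ι] [MeasurableSingletonClass ι]

/-- Breaking ties towards the least index makes the selected hypothesis a measurable function
of the sample. -/
noncomputable def erm (e : ι → X → Bool) : Alg X :=
  fun _ S => e (argminFirst fun i => empErr S (e i))

lemma isLearningAlg_erm {e : ι → X → Bool}
    (he : ∀ i, Measurable (e i)) : IsLearningAlg (erm e) := by
  intro n μ _
  have hidx : Measurable fun S : Fin n → X × Bool => argminFirst fun i => empErr S (e i) :=
    measurable_argminFirst fun i => measurable_empErr (he i)
  have heval : Measurable fun q : ι × X => e q.1 q.2 := measurable_from_prod_countable_right he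
  exact (heval.comp ((hidx.comp measurable_fst).prodMk measurable_snd)).nullMeasurable

lemma excess_erm_le (P : Measure (X × Bool)) [IsProbabilityMeasure P] {e : ι → X → Bool}
    (he : ∀ i, Measurable (e i)) (i₀ : ι) (n : ℕ) :
    excess P (range e) (erm e) n ≤ ∑ i, (er P (e i) - optErr P (range e)) *
      (sampleMeasure P n).real {S | empErr S (e i) ≤ empErr S (e i₀)} := by
  set opt := optErr P (range e)
  set idx := fun S : Fin n → X × Bool => argminFirst fun i => empErr S (e i)
  set A := fun i => {S : Fin n → X × Bool | empErr S (e i) ≤ empErr S (e i₀)}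
  have hA (i : ι) : MeasurableSet (A i) :=
    measurableSet_le (measurable_empErr (he i)) (measurable_empErr (he i₀))
  have hgap (i : ι) : 0 ≤ er P (e i) - opt := sub_nonneg.2 (optErr_le_er P (mem_range_self i))
  have hpoint (S : Fin n → X × Bool) :
      er P (e (idx S)) - opt ≤ ∑ i, (er P (e i) - opt) * (A i).indicator 1 S := by
    have hS : S ∈ A (idx S) := argminFirst_le (fun i => empErr S (e i)) i₀
    calc er P (e (idx S)) - opt = (er P (e (idx S)) - opt) * (A (idx S)).indicator 1 S := by
          rw [indicator_of_mem hS, Pi.one_apply, mul_one]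
      _ ≤ _ := Finset.single_le_sum (f := fun i => (er P (e i) - opt) * (A i).indicator 1 S)
          (fun i _ => mul_nonneg (hgap i) (indicator_nonneg (fun _ _ => zero_le_one) S))
          (Finset.mem_univ _)
  have hint : Integrable (fun S => er P (e (idx S))) (sampleMeasure P n) :=
    .of_mem_Icc 0 1 ((measurable_of_countable fun i => er P (e i)).comp
        (measurable_argminFirst fun i => measurable_empErr (he i))).aemeasurable
      (ae_of_all _ fun S => ⟨er_nonneg P _, er_le_one P _⟩)
  have hintA (i : ι) : Integrable (fun S => (er P (e i) - opt) * (A i).indicator 1 S)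
      (sampleMeasure P n) :=
    ((integrable_const 1).indicator (hA i)).const_mul _
  calc excess P (range e) (erm e) n = ∫ S, (er P (e (idx S)) - opt) ∂sampleMeasure P n := by
        rw [integral_sub hint (integrable_const _), integral_const, probReal_univ, one_smul]
        rfl
    _ ≤ ∫ S, ∑ i, (er P (e i) - opt) * (A i).indicator 1 S ∂sampleMeasure P n :=
        integral_mono (hint.sub (integrable_const _)) (integrable_finsetSum _ fun i _ => hintA i)
          hpoint
    _ = _ := by
        rw [integral_finsetSum _ fun i _ => hintA i]
        simp only [integral_const_mul, integral_indicator_one (hA _)]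
        rfl

theorem exists_excess_erm_le_exp (P : Measure (X × Bool)) [IsProbabilityMeasure P]
    {e : ι → X → Bool} (he : ∀ i, Measurable (e i)) :
    ∃ c > 0, ∀ n : ℕ, excess P (range e) (erm e) n ≤ Fintype.card ι * Real.exp (-(c * n)) := by
  obtain ⟨_, ⟨i₀, rfl⟩, hi₀⟩ := exists_er_eq_optErr P (finite_range e) (range_nonempty e)
  set γ := fun i => er P (e i) - optErr P (range e)
  -- the exponential rate of the `i`-th term of `excess_erm_le`; terms with `γ i = 0` vanish
  set r := fun i => if 0 < γ i then γ i ^ 2 / 2 else 1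
  have hr (i : ι) : 0 < r i := by
    simp only [r]
    split_ifs
    · positivity
    · exact one_pos
  obtain ⟨i₁, hi₁⟩ := Finite.exists_min r
  refine ⟨r i₁, hr i₁, fun n => (excess_erm_le P he i₀ n).trans ?_⟩
  calc _ ≤ ∑ _i : ι, Real.exp (-(r i₁ * n)) := Finset.sum_le_sum fun i _ => ?_
    _ = _ := by simp
  rcases (sub_nonneg.2 (optErr_le_er P (mem_range_self i))).eq_or_lt with h0 | hpos
  · rw [← h0, zero_mul]
    positivity
  have hri : r i = γ i ^ 2 / 2 := if_pos hpos
  calc γ i * (sampleMeasure P n).real {S | empErr S (e i) ≤ empErr S (e i₀)}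
      ≤ 1 * Real.exp (-(n * (er P (e i) - er P (e i₀)) ^ 2 / 2)) :=
        mul_le_mul (by linarith [er_le_one P (e i), er_nonneg P (e i₀)])
          (sampleMeasure_real_empErr_le_le_exp P (he i) (he i₀) (by linarith) n) measureReal_nonneg
          zero_le_one
    _ ≤ Real.exp (-(r i₁ * n)) := by
        rw [one_mul, hi₀]
        gcongr
        nlinarith [hi₁ i]

theorem learnableAtRate_exp_range {e : ι → X → Bool} (he : ∀ i, Measurable (e i)) :
    LearnableAtRate (range e) fun n => Real.exp (-n) := by
  refine ⟨erm e, isLearningAlg_erm he, fun P _ => ?_⟩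
  obtain ⟨c, hc, hle⟩ := exists_excess_erm_le_exp P he
  refine ⟨Fintype.card ι * Real.exp 1, by positivity, c, hc, fun n => (hle n).trans ?_⟩
  rw [mul_assoc]
  gcongr
  exact exp_neg_le_exp_one_mul_exp_neg_ceil (by positivity)

end ERM

section LowerBound

lemma bern_singleton (p : ℝ) (b : Bool) :
    bern p {b} = ENNReal.ofReal (if b then p else 1 - p) := by
  cases b <;> simp [bern]

lemma isProbabilityMeasure_bern {p : ℝ} (h₀ : 0 ≤ p) (h₁ : p ≤ 1) :
    IsProbabilityMeasure (bern p) := by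
  constructor
  simp [bern, ← ENNReal.ofReal_add h₀ (sub_nonneg.2 h₁)]

lemma pi_bern_quarter_ge_third_pow_mul (n : ℕ) (E : Set (Fin n → Bool)) :
    ENNReal.ofReal (1 / 3) ^ n * Measure.pi (fun _ => bern (3 / 4)) E ≤
      Measure.pi (fun _ => bern (1 / 4)) E := by
  have := isProbabilityMeasure_bern (p := 3 / 4) (by norm_num) (by norm_num)
  have := isProbabilityMeasure_bern (p := 1 / 4) (by norm_num) (by norm_num)
  have hbern (b : Bool) : ENNReal.ofReal (1 / 3) * bern (3 / 4) {b} ≤ bern (1 / 4) {b} := by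
    rw [bern_singleton, bern_singleton, ← ENNReal.ofReal_mul (by norm_num)]
    exact ENNReal.ofReal_le_ofReal (by cases b <;> norm_num)
  rw [← E.toFinite.coe_toFinset, ← sum_measure_singleton, ← sum_measure_singleton,
    Finset.mul_sum]
  refine Finset.sum_le_sum fun y _ => ?_
  simp only [Measure.pi_singleton]
  calc ENNReal.ofReal (1 / 3) ^ n * ∏ i, bern (3 / 4) {y i}
      = ∏ i, ENNReal.ofReal (1 / 3) * bern (3 / 4) {y i} := by
        rw [Finset.prod_mul_distrib, Finset.prod_const, Finset.card_univ, Fintype.card_fin]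
    _ ≤ ∏ i, bern (1 / 4) {y i} := Finset.prod_le_prod' fun i _ => hbern (y i)

variable {X : Type*} [MeasurableSpace X]

noncomputable def bernAt (x₀ : X) (p : ℝ) : Measure (X × Bool) := (bern p).map (Prod.mk x₀)

lemma isProbabilityMeasure_bernAt (x₀ : X) {p : ℝ} (h₀ : 0 ≤ p) (h₁ : p ≤ 1) :
    IsProbabilityMeasure (bernAt x₀ p) :=
  have := isProbabilityMeasure_bern h₀ h₁
  Measure.isProbabilityMeasure_map measurable_prodMk_left.aemeasurable

lemma sampleMeasure_bernAt (x₀ : X) {p : ℝ} (h₀ : 0 ≤ p) (h₁ : p ≤ 1) (n : ℕ) :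
    sampleMeasure (bernAt x₀ p) n =
      (Measure.pi fun _ : Fin n => bern p).map fun y i => (x₀, y i) := by
  have := isProbabilityMeasure_bernAt x₀ h₀ h₁
  rw [bernAt] at this ⊢
  exact (Measure.pi_map_pi fun _ => measurable_prodMk_left.aemeasurable).symm

variable [MeasurableSingletonClass X]

lemma er_bernAt (x₀ : X) {p : ℝ} (h₀ : 0 ≤ p) (h₁ : p ≤ 1) (g : X → Bool) :
    er (bernAt x₀ p) g = if g x₀ then 1 - p else p := by
  have : Prod.mk x₀ ⁻¹' {q : X × Bool | g q.1 ≠ q.2} = {!g x₀} := by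
    ext b
    cases hb : g x₀ <;> cases b <;> simp [hb]
  rw [er, bernAt, (measurableEmbedding_prodMk_left x₀).map_apply, this, bern_singleton]
  cases g x₀ <;> simp [h₀, h₁]

lemma measurableEmbedding_pi_prodMk_left (x₀ : X) (n : ℕ) :
    MeasurableEmbedding fun (y : Fin n → Bool) i => (x₀, y i) := by
  refine .of_measurable_inverse (g := fun S i => (S i).2) (by fun_prop) ?_ (by fun_prop)
    fun y => rfl
  have : range (fun (y : Fin n → Bool) i => (x₀, y i)) = univ.pi fun _ => {x₀} ×ˢ univ := by
    ext S
    simp only [mem_range, mem_univ_pi, mem_prod, mem_singleton_iff, mem_univ, and_true]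
    exact ⟨by rintro ⟨y, rfl⟩ i; rfl,
      fun h => ⟨fun i => (S i).2, funext fun i => Prod.ext (h i).symm rfl⟩⟩
  rw [this]
  exact .univ_pi fun _ => (measurableSet_singleton x₀).prod .univ

lemma expErr_bernAt (x₀ : X) {p : ℝ} (h₀ : 0 ≤ p) (h₁ : p ≤ 1) (f : Alg X) (n : ℕ) :
    expErr (bernAt x₀ p) f n = p + (1 - 2 * p) *
      (Measure.pi fun _ : Fin n => bern p).real {y | f n (fun i => (x₀, y i)) x₀ = true} := by
  have := isProbabilityMeasure_bern h₀ h₁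
  set A := {y : Fin n → Bool | f n (fun i => (x₀, y i)) x₀ = true}
  have hA : MeasurableSet A := A.toFinite.measurableSet
  have hpt (y : Fin n → Bool) :
      er (bernAt x₀ p) (f n fun i => (x₀, y i)) = p + (1 - 2 * p) * A.indicator 1 y := by
    rw [er_bernAt x₀ h₀ h₁, indicator_apply]
    simp only [A, mem_ofPred_eq, Pi.one_apply]
    split_ifs <;> ring
  rw [expErr, sampleMeasure_bernAt x₀ h₀ h₁, (measurableEmbedding_pi_prodMk_left x₀ n).integral_map]
  simp only [hpt]
  rw [integral_add (integrable_const _) (((integrable_const 1).indicator hA).const_mul _),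
    integral_const, probReal_univ, one_smul, integral_const_mul, integral_indicator_one hA]

lemma optErr_bernAt_le (x₀ : X) {H : Set (X → Bool)} (hH : ∀ b, ∃ h ∈ H, h x₀ = b) {p : ℝ}
    (h₀ : 0 ≤ p) (h₁ : p ≤ 1) : optErr (bernAt x₀ p) H ≤ min p (1 - p) := by
  obtain ⟨hT, hT_mem, hT_x⟩ := hH true
  obtain ⟨hF, hF_mem, hF_x⟩ := hH false
  refine le_min ((optErr_le_er _ hF_mem).trans_eq ?_) ((optErr_le_er _ hT_mem).trans_eq ?_) <;>
    simp [er_bernAt x₀ h₀ h₁, hT_x, hF_x]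

lemma excess_bernAt_ge (x₀ : X) {H : Set (X → Bool)} (hH : ∀ b, ∃ h ∈ H, h x₀ = b) (f : Alg X)
    (n : ℕ) :
    1 / 4 * (1 / 3) ^ n ≤ excess (bernAt x₀ (3 / 4)) H f n ∨
      1 / 4 * (1 / 3) ^ n ≤ excess (bernAt x₀ (1 / 4)) H f n := by
  have := isProbabilityMeasure_bern (p := 3 / 4) (by norm_num) (by norm_num)
  have := isProbabilityMeasure_bern (p := 1 / 4) (by norm_num) (by norm_num)
  set A := {y : Fin n → Bool | f n (fun i => (x₀, y i)) x₀ = true}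
  have hratio : (1 / 3) ^ n * (Measure.pi fun _ => bern (3 / 4)).real A ≤
      (Measure.pi fun _ => bern (1 / 4)).real A := by
    have := ENNReal.toReal_mono (measure_ne_top _ _) (pi_bern_quarter_ge_third_pow_mul n A)
    rwa [ENNReal.toReal_mul, ENNReal.toReal_pow, ENNReal.toReal_ofReal (by norm_num)] at this
  have hopt₁ := optErr_bernAt_le x₀ hH (p := 3 / 4) (by norm_num) (by norm_num)
  have hopt₂ := optErr_bernAt_le x₀ hH (p := 1 / 4) (by norm_num) (by norm_num)
  have hpow : (1 / 3 : ℝ) ^ n ≤ 1 := pow_le_one₀ (by norm_num) (by norm_num)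
  rw [excess, excess, expErr_bernAt x₀ (by norm_num) (by norm_num),
    expErr_bernAt x₀ (by norm_num) (by norm_num)]
  by_cases hle : (Measure.pi fun _ : Fin n => bern (3 / 4)).real A ≤ 1 / 2
  · left
    norm_num at hopt₁ ⊢
    linarith
  · right
    have : (1 / 3 : ℝ) ^ n * (1 / 2) ≤ (1 / 3) ^ n * (Measure.pi fun _ => bern (3 / 4)).real A :=
      by gcongr; linarith
    norm_num at hopt₂ ⊢
    linarith

theorem notLearnableFasterThan_exp {H : Set (X → Bool)} (hH : H.Nontrivial) :
    NotLearnableFasterThan H fun n => Real.exp (-n) := by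
  obtain ⟨g₁, hg₁, g₂, hg₂, hne⟩ := hH
  obtain ⟨x₀, hx₀⟩ := Function.ne_iff.1 hne
  have hlabels (b : Bool) : ∃ h ∈ H, h x₀ = b := by
    by_cases hb : g₁ x₀ = b
    · exact ⟨g₁, hg₁, hb⟩
    · exact ⟨g₂, hg₂, by cases b <;> cases h₁ : g₁ x₀ <;> cases h₂ : g₂ x₀ <;> simp_all⟩
  refine ⟨1 / 4, by norm_num, 2, by norm_num, fun f _ => ?_⟩
  have key (n : ℕ) :
      1 / 4 * Real.exp (-⌈2 * (n : ℝ)⌉₊) ≤ excess (bernAt x₀ (3 / 4)) H f n ∨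
        1 / 4 * Real.exp (-⌈2 * (n : ℝ)⌉₊) ≤ excess (bernAt x₀ (1 / 4)) H f n :=
    (excess_bernAt_ge x₀ hlabels f n).imp
      (le_trans (by gcongr; exact exp_neg_ceil_two_mul_le n))
      (le_trans (by gcongr; exact exp_neg_ceil_two_mul_le n))
  obtain h | h := frequently_or_distrib.1 (Frequently.of_forall (f := atTop) key)
  · exact ⟨_, isProbabilityMeasure_bernAt x₀ (by norm_num) (by norm_num), h⟩
  · exact ⟨_, isProbabilityMeasure_bernAt x₀ (by norm_num) (by norm_num), h⟩

end LowerBound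

/-- Theorem 2.2: any finite concept class with at least two elements is
agnostically learnable with optimal rate `e^{-n}`. -/
theorem finite_class_optimal_exponential_rate
    {X : Type*} [TopologicalSpace X] [PolishSpace X] [MeasurableSpace X] [BorelSpace X]
    (H : Set (X → Bool)) (hmeas : ∀ h ∈ H, Measurable h)
    (hfin : H.Finite) (hnt : H.Nontrivial) :
    LearnableAtRate H (fun n => Real.exp (-(n : ℝ))) ∧
      NotLearnableFasterThan H (fun n => Real.exp (-(n : ℝ))) := by
  obtain ⟨m, e, rfl⟩ := hfin.fin_embedding
  obtain ⟨_, ⟨i, -⟩⟩ := hnt.nonempty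
  have : Nonempty (Fin m) := ⟨i⟩
  exact ⟨learnableAtRate_exp_range fun i => hmeas _ (mem_range_self i),
    notLearnableFasterThan_exp hnt⟩

end Agn
end

section
/- Any concept class H of Borel-measurable functions X → {0,1} with |H| ≥ 2 is not agnostically learnable faster than e^{−n}: there exist constants C, c > 0 such that for every learning algorithm ĥ_n there exists a probability distribution P on X × {0,1} with E[er_P(ĥ_n)] − inf_{h∈H} er_P(h) ≥ C·e^{−c·n} for infinitely many n ∈ ℕ. -/
open MeasureTheory Filter
open scoped ENNReal

/-!
Put all the mass on a point `x₀` at which two hypotheses of `H` disagree, with label `b` with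
probability `3/4`. The best hypothesis then has error `1/4`, and the excess error of the learner is
half the probability that its prediction at `x₀` is not `b`. The two choices of `b` give
distributions whose masses differ by a factor at most `3`, so their `n`-fold products differ by a
factor at most `3ⁿ`: no learner can predict both labels with probability close to `1`, the two
excess errors add up to at least `3⁻ⁿ/2`, and one of them is at least `3⁻ⁿ/4` infinitely often.
-/

namespace MeasureTheory

variable {α : Type*} [MeasurableSpace α]

theorem Measure.pow_smul_pi_le_pi {μ ν : Measure α} [SigmaFinite μ] [SigmaFinite ν]
    {c : ℝ≥0∞} (h : c • μ ≤ ν) (n : ℕ) :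
    c ^ n • Measure.pi (fun _ : Fin n => μ) ≤ Measure.pi fun _ : Fin n => ν := by
  induction n with
  | zero => rw [Measure.pi_of_empty, Measure.pi_of_empty, pow_zero, one_smul]
  | succ n ih =>
    rw [← (measurePreserving_piFinSuccAbove (fun _ => μ) 0).symm.map_eq,
      ← (measurePreserving_piFinSuccAbove (fun _ => ν) 0).symm.map_eq, ← Measure.map_smul,
      pow_succ, mul_smul, ← Measure.prod_smul_left, ← Measure.prod_smul_right]
    exact Measure.map_mono (Measure.prod_mono h ih) (MeasurableEquiv.measurable _)

theorem le_measure_add_measure_compl {μ ν : Measure α} [IsProbabilityMeasure μ] {c : ℝ≥0∞}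
    (hc : c ≤ 1) (h : c • μ ≤ ν) (s : Set α) : c ≤ μ s + ν sᶜ :=
  calc c = c * μ (s ∪ sᶜ) := by rw [Set.union_compl_self, measure_univ, mul_one]
    _ ≤ c * μ s + c * μ sᶜ := by rw [← mul_add]; gcongr; exact measure_union_le s sᶜ
    _ ≤ μ s + ν sᶜ := by
      gcongr
      · exact mul_le_of_le_one_left' hc
      · exact h sᶜ

end MeasureTheory

theorem Set.Nontrivial.exists_forall_exists_mem_apply_eq {α : Type*} {H : Set (α → Bool)}
    (hH : H.Nontrivial) : ∃ x₀, ∀ b : Bool, ∃ h ∈ H, h x₀ = b := by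
  obtain ⟨g₀, hg₀, g₁, hg₁, hne⟩ := hH
  obtain ⟨x₀, hx₀⟩ := Function.ne_iff.1 hne
  refine ⟨x₀, fun b => ?_⟩
  by_cases hb : g₀ x₀ = b
  · exact ⟨g₀, hg₀, hb⟩
  · exact ⟨g₁, hg₁, by revert hx₀ hb; cases g₀ x₀ <;> cases g₁ x₀ <;> cases b <;> simp⟩

namespace Agn

theorem UnivMeasurable.comp_measurable {α β γ : Type*} [MeasurableSpace α] [MeasurableSpace β]
    [MeasurableSpace γ] {F : β → γ} (hF : UnivMeasurable F) {g : α → β} (hg : Measurable g) :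
    UnivMeasurable (F ∘ g) := fun μ _ =>
  (hF _ (Measure.isProbabilityMeasure_map hg.aemeasurable)).comp_quasiMeasurePreserving
    (hg.measurePreserving μ).quasiMeasurePreserving

instance {X : Type*} [MeasurableSpace X] (P : Measure (X × Bool)) [IsProbabilityMeasure P]
    (n : ℕ) : IsProbabilityMeasure (sampleMeasure P n) := by
  unfold sampleMeasure; infer_instance

section NoisyPoint

variable {X : Type*} [MeasurableSpace X]

noncomputable def noisyAt (x₀ : X) (b : Bool) : Measure (X × Bool) :=
  ENNReal.ofReal (3 / 4) • Measure.dirac (x₀, b) + ENNReal.ofReal (1 / 4) • Measure.dirac (x₀, !b)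

instance (x₀ : X) (b : Bool) : IsProbabilityMeasure (noisyAt x₀ b) := by
  constructor
  simp only [noisyAt, Measure.add_apply, Measure.smul_apply, measure_univ, smul_eq_mul, mul_one]
  rw [← ENNReal.ofReal_add (by norm_num) (by norm_num)]
  norm_num

theorem smul_noisyAt_le (x₀ : X) (b b' : Bool) :
    ENNReal.ofReal (1 / 3) • noisyAt x₀ b ≤ noisyAt x₀ b' := by
  set D := Measure.dirac (x₀, true) + Measure.dirac (x₀, false)
  have fibre : ∀ y : Bool, Measure.dirac (x₀, y) + Measure.dirac (x₀, !y) = D := by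
    intro y; cases y; exacts [add_comm _ _, rfl]
  have lower : ENNReal.ofReal (1 / 4) • D ≤ noisyAt x₀ b' := by
    rw [← fibre b', smul_add, noisyAt]; gcongr; norm_num
  have upper : noisyAt x₀ b ≤ ENNReal.ofReal (3 / 4) • D := by
    rw [← fibre b, smul_add, noisyAt]; gcongr; norm_num
  calc ENNReal.ofReal (1 / 3) • noisyAt x₀ b
        ≤ ENNReal.ofReal (1 / 3) • ENNReal.ofReal (3 / 4) • D := by gcongr
    _ = ENNReal.ofReal (1 / 4) • D := by
        rw [smul_smul, ← ENNReal.ofReal_mul (by norm_num)]; norm_num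
    _ ≤ noisyAt x₀ b' := lower

variable [MeasurableSingletonClass X]

theorem er_noisyAt (x₀ : X) (b : Bool) (h : X → Bool) :
    er (noisyAt x₀ b) h = if h x₀ = b then 1 / 4 else 3 / 4 := by
  cases b <;> cases hb : h x₀ <;>
    simp [er, noisyAt, Measure.dirac_apply, hb] <;> norm_num

theorem optErr_noisyAt {H : Set (X → Bool)} {x₀ : X} {b : Bool} (hb : ∃ h ∈ H, h x₀ = b) :
    optErr (noisyAt x₀ b) H = 1 / 4 := by
  obtain ⟨h, hH, rfl⟩ := hb
  refine IsLeast.csInf_eq ⟨⟨h, hH, by simp [er_noisyAt]⟩, ?_⟩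
  rintro _ ⟨g, -, rfl⟩
  simp only [er_noisyAt]
  split_ifs <;> norm_num

theorem expErr_noisyAt {f : Alg X} (hf : IsLearningAlg f) (x₀ : X) (b : Bool) (n : ℕ) :
    expErr (noisyAt x₀ b) f n =
      1 / 4 + 1 / 2 * (sampleMeasure (noisyAt x₀ b) n).real {S | f n S x₀ ≠ b} := by
  set Q := sampleMeasure (noisyAt x₀ b) n
  set A := {S | f n S x₀ ≠ b}
  have hA : NullMeasurableSet A Q :=
    (hf n).comp_measurable measurable_prodMk_right Q inferInstance (measurableSet_singleton b).compl
  have her : ∀ S, er (noisyAt x₀ b) (f n S) = 1 / 4 + A.indicator (fun _ => 1 / 2) S := by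
    intro S
    by_cases h : f n S x₀ = b <;> simp [er_noisyAt, A, h]; norm_num
  rw [expErr, funext her, integral_add (integrable_const _) ((integrable_const _).indicator₀ hA),
    integral_const, integral_indicator₀ hA, setIntegral_const]
  simp [mul_comm]

theorem excess_noisyAt {H : Set (X → Bool)} {f : Alg X} (hf : IsLearningAlg f) {x₀ : X}
    {b : Bool} (hb : ∃ h ∈ H, h x₀ = b) (n : ℕ) :
    excess (noisyAt x₀ b) H f n =
      1 / 2 * (sampleMeasure (noisyAt x₀ b) n).real {S | f n S x₀ ≠ b} := by
  rw [excess, expErr_noisyAt hf, optErr_noisyAt hb]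
  ring

theorem pow_le_excess_add_excess {H : Set (X → Bool)} {f : Alg X} (hf : IsLearningAlg f)
    {x₀ : X} (hx₀ : ∀ b : Bool, ∃ h ∈ H, h x₀ = b) (n : ℕ) :
    (1 / 3) ^ n / 2 ≤ excess (noisyAt x₀ false) H f n + excess (noisyAt x₀ true) H f n := by
  have key := le_measure_add_measure_compl
    (pow_le_one' (ENNReal.ofReal_le_one.2 (by norm_num)) n)
    (Measure.pow_smul_pi_le_pi (smul_noisyAt_le x₀ false true) n) {S | f n S x₀ ≠ false}
  have hcompl : {S : Fin n → X × Bool | f n S x₀ ≠ false}ᶜ = {S | f n S x₀ ≠ true} := by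
    ext; simp
  rw [hcompl] at key
  have key' := ENNReal.toReal_mono (by finiteness) key
  rw [ENNReal.toReal_add (by finiteness) (by finiteness), ENNReal.toReal_pow,
    ENNReal.toReal_ofReal (by norm_num)] at key'
  rw [excess_noisyAt hf (hx₀ false), excess_noisyAt hf (hx₀ true)]
  simp only [sampleMeasure, measureReal_def]
  linarith

end NoisyPoint

theorem not_learnable_faster_than_exponential_general
    {X : Type*} [TopologicalSpace X] [PolishSpace X] [MeasurableSpace X] [BorelSpace X]
    (H : Set (X → Bool)) (hnt : H.Nontrivial) :
    ∃ C > (0 : ℝ), ∃ c > (0 : ℝ), ∀ f : Alg X, IsLearningAlg f →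
      ∃ P : Measure (X × Bool), IsProbabilityMeasure P ∧
        ∃ᶠ n : ℕ in atTop, C * Real.exp (-(c * (n : ℝ))) ≤ excess P H f n := by
  obtain ⟨x₀, hx₀⟩ := hnt.exists_forall_exists_mem_apply_eq
  refine ⟨1 / 4, by norm_num, Real.log 3, Real.log_pos (by norm_num), fun f hf => ?_⟩
  have hrate (n : ℕ) : Real.exp (-(Real.log 3 * n)) = (1 / 3) ^ n := by
    rw [mul_comm, Real.exp_neg, Real.exp_nat_mul, Real.exp_log (by norm_num), one_div, inv_pow]
  have hsplit (n : ℕ) :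
      1 / 4 * Real.exp (-(Real.log 3 * n)) ≤ excess (noisyAt x₀ false) H f n ∨
        1 / 4 * Real.exp (-(Real.log 3 * n)) ≤ excess (noisyAt x₀ true) H f n := by
    have := pow_le_excess_add_excess hf hx₀ n
    rw [hrate]
    by_contra! h
    linarith [h.1, h.2]
  rcases frequently_or_distrib.1 (Frequently.of_forall (f := atTop) hsplit) with h | h
  exacts [⟨_, inferInstance, h⟩, ⟨_, inferInstance, h⟩]

/-- Theorem 4.2: any concept class with at least two elements is not
agnostically learnable faster than `e^{-n}`. -/
theorem not_learnable_faster_than_exponential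
    {X : Type*} [TopologicalSpace X] [PolishSpace X] [MeasurableSpace X] [BorelSpace X]
    (H : Set (X → Bool)) (hmeas : ∀ h ∈ H, Measurable h) (hnt : H.Nontrivial) :
    ∃ C > (0 : ℝ), ∃ c > (0 : ℝ), ∀ f : Alg X, IsLearningAlg f →
      ∃ P : Measure (X × Bool), IsProbabilityMeasure P ∧
        ∃ᶠ n : ℕ in atTop, C * Real.exp (-(c * (n : ℝ))) ≤ excess P H f n :=
  not_learnable_faster_than_exponential_general H hnt

end Agn
end

section
/- Any infinite concept class H has an infinite eluder sequence: if H is an infinite set of functions h : X → {0,1} on a set X, then there exist sequences (x_i)_{i∈ℕ} in X, (y_i)_{i∈ℕ} in {0,1}, and (h_i)_{i∈ℕ} in H such that for every i ∈ ℕ, h_i(x_j) = y_j for all j < i, and h_i(x_i) ≠ y_i. -/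
open MeasureTheory Filter
open scoped ENNReal

namespace Agn

/-!
Pick a point where two members of an infinite class differ. Since there are finitely many labels,
some label has an infinite fiber at that point, and one of the two members lies outside it.
Iterating inside that fiber yields a decreasing chain `H = V₀ ⊇ V₁ ⊇ ⋯` of infinite classes, where
`Vₙ₊₁` labels `xₙ` by `yₙ` and some `hₙ ∈ Vₙ` disagrees with `yₙ` at `xₙ`.
-/

section Eluder

variable {X β : Type*}

theorem exists_proper_infinite_fiber [Finite β] {V : Set (X → β)} (hV : V.Infinite) :
    ∃ (x : X) (y : β), (∃ h ∈ V, h x ≠ y) ∧ {g ∈ V | g x = y}.Infinite := by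
  obtain ⟨h₁, h₁V, h₂, h₂V, hne⟩ := hV.nontrivial
  obtain ⟨x, hx⟩ := Function.ne_iff.mp hne
  obtain ⟨y, hy⟩ : ∃ y, {g ∈ V | g x = y}.Infinite := by
    by_contra! hfin
    exact hV (Set.Finite.of_finite_fibers (fun g : X → β => g x) (Set.toFinite _)
      fun y _ => hfin y)
  refine ⟨x, y, ?_, hy⟩
  by_cases h₁y : h₁ x = y
  · exact ⟨h₂, h₂V, fun h₂y => hx (h₁y.trans h₂y.symm)⟩
  · exact ⟨h₁, h₁V, h₁y⟩

theorem eluder_of_antitone {V : ℕ → Set (X → β)} (hV : Antitone V) {x : ℕ → X} {y : ℕ → β}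
    (hVy : ∀ n, ∀ g ∈ V (n + 1), g (x n) = y n) {h : ℕ → X → β} (hVh : ∀ n, h n ∈ V n)
    (hy : ∀ n, h n (x n) ≠ y n) (i : ℕ) :
    (∀ j < i, h i (x j) = y j) ∧ h i (x i) ≠ y i :=
  ⟨fun j hj => hVy j _ (hV (Nat.succ_le_of_lt hj) (hVh i)), hy i⟩

end Eluder

/-- Lemma 5.4: every infinite concept class has an infinite eluder
sequence. -/
theorem infinite_class_has_infinite_eluder
    {X : Type*} (H : Set (X → Bool)) (hinf : H.Infinite) :
    ∃ (x : ℕ → X) (y : ℕ → Bool) (hs : ℕ → X → Bool),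
      (∀ i, hs i ∈ H) ∧
      ∀ i : ℕ, (∀ j < i, hs i (x j) = y j) ∧ hs i (x i) ≠ y i := by
  choose x y hne hfib using fun V : {V : Set (X → Bool) // V.Infinite} =>
    exists_proper_infinite_fiber V.2
  choose h hV hy using hne
  let next (V : {V : Set (X → Bool) // V.Infinite}) : {V : Set (X → Bool) // V.Infinite} :=
    ⟨_, hfib V⟩
  let V (n : ℕ) := next^[n] ⟨H, hinf⟩
  have hV_succ (n : ℕ) : V (n + 1) = next (V n) := Function.iterate_succ_apply' next n _
  have hanti : Antitone fun n => (V n).1 := antitone_nat_of_succ_le fun n => by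
    rw [hV_succ]
    exact Set.sep_subset _ _
  have hVy (n : ℕ) : ∀ g ∈ (V (n + 1)).1, g (x (V n)) = y (V n) := by
    rw [hV_succ]
    exact fun g hg => hg.2
  exact ⟨fun n => x (V n), fun n => y (V n), fun n => h (V n), fun n => hanti n.zero_le (hV _),
    eluder_of_antitone hanti hVy (fun n => hV _) (fun n => hy _)⟩

end Agn
end
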